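/- arXiv:2304.04288 — 3 statements merged into one kernel-verified Lean document; each statement's English description precedes it below -/
import Mathlib

section
/- For the dihedral group D_{2n} with n ≥ 3, the characteristic polynomial of the distance matrix of the enhanced power graph of D_{2n} equals (x+2)^{n−1}(x+1)^{n−2}(x³ − (3n−4)x² − (2n² + 4n − 5)x − n² − 2n + 2). -/
open Polynomial

/-- The enhanced power graph of a group `G`: distinct `a`, `b` are adjacent iff
they lie in a common cyclic subgroup. -/
def enhancedPowerGraph (G : Type*) [Group G] : SimpleGraph G where
  Adj a b := a ≠ b ∧ ∃ c : G, a ∈ Subgroup.zpowers c ∧ b ∈ Subgroup.zpowers c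
  symm := ⟨by rintro a b ⟨h, c, ha, hb⟩; exact ⟨h.symm, c, hb, ha⟩⟩
  loopless := ⟨by rintro a ⟨h, _⟩; exact h rfl⟩

/-- The power graph of a group `G`: distinct `a`, `b` are adjacent iff
one is a power of the other. -/
def powerGraph (G : Type*) [Group G] : SimpleGraph G where
  Adj a b := a ≠ b ∧ (a ∈ Subgroup.zpowers b ∨ b ∈ Subgroup.zpowers a)
  symm := ⟨by rintro a b ⟨h, hc⟩; exact ⟨h.symm, hc.symm⟩⟩
  loopless := ⟨by rintro a ⟨h, _⟩; exact h rfl⟩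

/-- The distance matrix of a graph, with real entries. -/
noncomputable def distMatrix {V : Type*} (Γ : SimpleGraph V) : Matrix V V ℝ :=
  fun u v => (Γ.dist u v : ℝ)

/-- The elementary abelian group `El(p^n) = (ℤ/p)^n`, written multiplicatively. -/
abbrev El (p n : ℕ) : Type := Multiplicative (Fin n → ZMod p)

/-!
The identity of `D_{2n}` is adjacent to every other vertex of the enhanced power graph, so
all distances are `0`, `1` or `2`. The rotations all lie in `⟨r 1⟩` and are pairwise
adjacent, whereas a reflection `sr i` lies in no cyclic subgroup other than `{1, sr i}`.
Hence `x I - D` is the diagonal matrix with entries `x + 1` on rotations and `x + 2` on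
reflections plus a matrix of rank `3`, and at every `x ∉ {-1, -2}` the matrix determinant
lemma reduces `det (x I - D)` to a `3 × 3` determinant. Two polynomials agreeing at
infinitely many points are equal.
-/

theorem enhancedPowerGraph_adj_one {G : Type*} [Group G] {x : G} (hx : x ≠ 1) :
    (enhancedPowerGraph G).Adj 1 x :=
  ⟨hx.symm, x, one_mem _, Subgroup.mem_zpowers x⟩

theorem enhancedPowerGraph_dist_eq_two {G : Type*} [Group G] {u v : G} (huv : u ≠ v)
    (h : ¬ (enhancedPowerGraph G).Adj u v) : (enhancedPowerGraph G).dist u v = 2 := by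
  have hu : u ≠ 1 := by rintro rfl; exact h (enhancedPowerGraph_adj_one huv.symm)
  have hv : v ≠ 1 := by rintro rfl; exact h (enhancedPowerGraph_adj_one huv).symm
  have hle : (enhancedPowerGraph G).dist u v ≤ 2 :=
    SimpleGraph.dist_le (.cons (enhancedPowerGraph_adj_one hu).symm
      (.cons (enhancedPowerGraph_adj_one hv) .nil))
  have h0 : (enhancedPowerGraph G).dist u v ≠ 0 :=
    SimpleGraph.Reachable.dist_eq_zero_iff (.trans (enhancedPowerGraph_adj_one hu).symm.reachable
      (enhancedPowerGraph_adj_one hv).reachable) |>.not.mpr huv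
  have h1 : (enhancedPowerGraph G).dist u v ≠ 1 := mt SimpleGraph.dist_eq_one_iff_adj.mp h
  omega

theorem Matrix.det_diagonal_add_mul {ι κ K : Type*} [Fintype ι] [DecidableEq ι] [Fintype κ]
    [DecidableEq κ] [Field K] {d : ι → K} (hd : ∀ i, d i ≠ 0) (U : Matrix ι κ K)
    (W : Matrix κ ι K) :
    (diagonal d + U * W).det = (∏ i, d i) * (1 + W * diagonal d⁻¹ * U).det := by
  have hdd : diagonal d * diagonal d⁻¹ = 1 := by
    rw [diagonal_mul_diagonal, ← diagonal_one]
    exact congrArg diagonal (funext fun i => mul_inv_cancel₀ (hd i))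
  have hfactor : diagonal d + U * W = diagonal d * (1 + diagonal d⁻¹ * U * W) := by
    rw [Matrix.mul_add, Matrix.mul_one, ← Matrix.mul_assoc, ← Matrix.mul_assoc, hdd,
      Matrix.one_mul]
  rw [hfactor, det_mul, det_diagonal, det_one_add_mul_comm, Matrix.mul_assoc]

namespace DihedralGroup

variable {n : ℕ}

@[to_additive]
theorem prod_univ {M : Type*} [CommMonoid M] [NeZero n] (f : DihedralGroup n → M) :
    ∏ g, f g = (∏ i, f (r i)) * ∏ i, f (sr i) :=
  (Fintype.prod_equiv equivSum.symm _ _ fun _ => rfl).symm.trans (Fintype.prod_sum_type _)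

theorem sr_zpow (i : ZMod n) (k : ℤ) : sr i ^ k = 1 ∨ sr i ^ k = sr i := by
  rw [← zpow_mod_orderOf, orderOf_sr]
  rcases Int.emod_two_eq_zero_or_one k with h | h <;> simp [h]

theorem eq_sr_of_sr_mem_zpowers {i : ZMod n} {c : DihedralGroup n}
    (h : sr i ∈ Subgroup.zpowers c) : c = sr i := by
  obtain ⟨k, hk⟩ := h
  rcases c with j | j
  · simp at hk
  · rcases sr_zpow j k with h | h <;> simp only [h] at hk
    · cases hk
    · exact hk

theorem enhancedPowerGraph_adj_sr_iff {i : ZMod n} {x : DihedralGroup n} :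
    (enhancedPowerGraph (DihedralGroup n)).Adj (sr i) x ↔ x = 1 := by
  refine ⟨fun ⟨hne, c, hi, hx⟩ => ?_, ?_⟩
  · obtain rfl := eq_sr_of_sr_mem_zpowers hi
    obtain ⟨k, rfl⟩ := hx
    exact (sr_zpow i k).resolve_right (Ne.symm hne)
  · rintro rfl
    exact (enhancedPowerGraph_adj_one (by simp [← r_zero])).symm

theorem enhancedPowerGraph_adj_r_r [NeZero n] {i j : ZMod n} (h : i ≠ j) :
    (enhancedPowerGraph (DihedralGroup n)).Adj (r i) (r j) := by
  refine ⟨by simpa using h, r 1, ⟨i.val, ?_⟩, ⟨j.val, ?_⟩⟩ <;> simp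

theorem enhancedPowerGraph_dist_r_r [NeZero n] (i j : ZMod n) :
    (enhancedPowerGraph (DihedralGroup n)).dist (r i) (r j) = if i = j then 0 else 1 := by
  split_ifs with h
  · rw [h, SimpleGraph.dist_self]
  · exact SimpleGraph.dist_eq_one_iff_adj.mpr (enhancedPowerGraph_adj_r_r h)

theorem enhancedPowerGraph_dist_sr_r (i j : ZMod n) :
    (enhancedPowerGraph (DihedralGroup n)).dist (sr i) (r j) = if j = 0 then 1 else 2 := by
  split_ifs with h
  · exact SimpleGraph.dist_eq_one_iff_adj.mpr (enhancedPowerGraph_adj_sr_iff.mpr (h ▸ r_zero))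
  · refine enhancedPowerGraph_dist_eq_two (by simp) (enhancedPowerGraph_adj_sr_iff.not.mpr ?_)
    simpa [← r_zero] using h

theorem enhancedPowerGraph_dist_sr_sr (i j : ZMod n) :
    (enhancedPowerGraph (DihedralGroup n)).dist (sr i) (sr j) = if i = j then 0 else 2 := by
  split_ifs with h
  · rw [h, SimpleGraph.dist_self]
  · refine enhancedPowerGraph_dist_eq_two (by simpa using h)
      (enhancedPowerGraph_adj_sr_iff.not.mpr (by simp [← r_zero]))

def charmatrixDiag (n : ℕ) (x : ℝ) : DihedralGroup n → ℝ
  | r _ => x + 1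
  | sr _ => x + 2

def charmatrixLeft (n : ℕ) : Matrix (DihedralGroup n) (Fin 3) ℝ := Matrix.of fun
  | r i => ![1, if i = 0 then 1 else 0, 0]
  | sr _ => ![0, 0, 1]

def charmatrixRight (n : ℕ) : Matrix (Fin 3) (DihedralGroup n) ℝ := Matrix.of fun k g =>
  match g with
  | r j => ![-1, 0, (if j = 0 then 1 else 0) - 2] k
  | sr _ => ![-2, 1, -2] k

theorem scalar_sub_distMatrix [NeZero n] (x : ℝ) :
    Matrix.scalar _ x - distMatrix (enhancedPowerGraph (DihedralGroup n)) =
      Matrix.diagonal (charmatrixDiag n x) + charmatrixLeft n * charmatrixRight n := by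
  ext g h
  rcases g with i | i <;> rcases h with j | j
  all_goals
    simp only [distMatrix, SimpleGraph.dist_comm (u := r _) (v := sr _),
      enhancedPowerGraph_dist_r_r, enhancedPowerGraph_dist_sr_r, enhancedPowerGraph_dist_sr_sr,
      Matrix.sub_apply, Matrix.scalar_apply, Matrix.diagonal_apply, Matrix.add_apply,
      Matrix.mul_apply, Fin.sum_univ_three, charmatrixDiag, charmatrixLeft, charmatrixRight,
      Matrix.of_apply, r.injEq, sr.injEq, reduceCtorEq, if_false, Matrix.cons_val_zero,
      Matrix.cons_val_one, Matrix.cons_val_two]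
    split_ifs <;> norm_num

noncomputable def reducedMatrix (n : ℕ) (x : ℝ) : Matrix (Fin 3) (Fin 3) ℝ :=
  !![-n / (x + 1), -1 / (x + 1), -2 * n / (x + 2);
     0, 0, n / (x + 2);
     (1 - 2 * n) / (x + 1), -1 / (x + 1), -2 * n / (x + 2)]

theorem charmatrixRight_mul_diagonal_mul_charmatrixLeft [NeZero n] (x : ℝ) :
    charmatrixRight n * Matrix.diagonal (charmatrixDiag n x)⁻¹ * charmatrixLeft n =
      reducedMatrix n x := by
  ext k l
  rw [Matrix.mul_apply]
  simp only [Matrix.mul_diagonal, sum_univ]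
  fin_cases k <;> fin_cases l <;>
    simp [charmatrixRight, charmatrixLeft, charmatrixDiag, reducedMatrix, sub_mul,
      Finset.sum_sub_distrib] <;>
    ring

theorem det_one_add_reducedMatrix {x : ℝ} (hx1 : x + 1 ≠ 0) (hx2 : x + 2 ≠ 0) :
    (x + 1) ^ 2 * (x + 2) * (1 + reducedMatrix n x).det =
      x ^ 3 - (3 * n - 4) * x ^ 2 - (2 * n ^ 2 + 4 * n - 5) * x - (n ^ 2 + 2 * n - 2) := by
  rw [Matrix.det_fin_three]
  simp only [reducedMatrix, Matrix.add_apply, Matrix.one_apply_eq, Matrix.one_apply_ne,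
    Matrix.of_apply, Matrix.cons_val', Matrix.cons_val_zero, Matrix.cons_val_one, Matrix.cons_val,
    Matrix.cons_val_fin_one, ne_eq, Fin.reduceEq, not_false_eq_true]
  field_simp
  ring

theorem eval_charpoly_distMatrix [NeZero n] {x : ℝ} (hx1 : x + 1 ≠ 0) (hx2 : x + 2 ≠ 0) :
    (distMatrix (enhancedPowerGraph (DihedralGroup n))).charpoly.eval x =
      (x + 1) ^ n * (x + 2) ^ n * (1 + reducedMatrix n x).det := by
  have hd : ∀ g, charmatrixDiag n x g ≠ 0 := by rintro (i | i) <;> assumption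
  rw [Matrix.eval_charpoly, scalar_sub_distMatrix, Matrix.det_diagonal_add_mul hd,
    charmatrixRight_mul_diagonal_mul_charmatrixLeft, prod_univ]
  simp [charmatrixDiag]

end DihedralGroup

theorem stmt5 (n : ℕ) [NeZero n] (hn : 3 ≤ n) :
    (distMatrix (enhancedPowerGraph (DihedralGroup n))).charpoly
      = (X + C 2) ^ (n - 1) * (X + C 1) ^ (n - 2) *
        (X ^ 3 - C (3 * (n : ℝ) - 4) * X ^ 2
          - C (2 * (n : ℝ) ^ 2 + 4 * n - 5) * X
          - C ((n : ℝ) ^ 2 + 2 * n - 2)) := by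
  refine eq_of_infinite_eval_eq _ _ <|
    (Set.toFinite {-1, -2}).infinite_compl.mono fun x hx => ?_
  have hx1 : x + 1 ≠ 0 := fun h => hx (by simp [eq_neg_of_add_eq_zero_left h])
  have hx2 : x + 2 ≠ 0 := fun h => hx (by simp [eq_neg_of_add_eq_zero_left h])
  rw [Set.mem_ofPred_eq, DihedralGroup.eval_charpoly_distMatrix hx1 hx2]
  simp only [eval_mul, eval_pow, eval_add, eval_sub, eval_X, eval_C]
  rw [← DihedralGroup.det_one_add_reducedMatrix hx1 hx2,
    ← pow_sub_mul_pow (x + 1) (by omega : 2 ≤ n),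
    ← pow_sub_mul_pow (x + 2) (by omega : 1 ≤ n)]
  ring
end

section
/- Let p, q be distinct primes, n, m ≥ 1, and G = El(p^n) × El(q^m) with identity (e, e). Define V₁ = {(e,e)}, V₂ = {(a, e) : a ≠ e}, V₃ = {(a, b) : a ≠ e, b ≠ e}, V₄ = {(e, b) : b ≠ e}. Then {V₁, V₂, V₃, V₄} is an equitable partition of the power graph of G; in particular, every vertex u ∈ V₃ satisfies |N(u) ∩ V₂| = p − 1, |N(u) ∩ V₃| = (p−1)(q−1) − 1, and |N(u) ∩ V₄| = q − 1. -/
open Polynomial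

/-- The four parts `V₁, V₂, V₃, V₄` of the partition of `El(pⁿ) × El(qᵐ)`. -/
def partV (p q n m : ℕ) : Fin 4 → Set (El p n × El q m)
  | 0 => {u | u.1 = 1 ∧ u.2 = 1}
  | 1 => {u | u.1 ≠ 1 ∧ u.2 = 1}
  | 2 => {u | u.1 ≠ 1 ∧ u.2 ≠ 1}
  | 3 => {u | u.1 = 1 ∧ u.2 ≠ 1}

/-!
Linear automorphisms `φ` of `El(pⁿ)` and `ψ` of `El(qᵐ)`, viewed as vector spaces over `𝔽_p` and
`𝔽_q`, give group automorphisms `φ × ψ`, hence power-graph automorphisms preserving every part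
`Vᵢ`. Since `GL` acts transitively on nonzero vectors, these act transitively on each `Vᵢ`, so the
partition is equitable. For `u = (a, b) ∈ V₃`, coprimality of `p` and `q` gives
`⟨u⟩ = ⟨a⟩ × ⟨b⟩` (Chinese remainder theorem), and in a group of prime exponent every nontrivial
element of `⟨c⟩` generates `⟨c⟩`; hence `N(u) = ⟨a⟩ × ⟨b⟩ \ {u}`, whose intersections with the
parts are counted directly.
-/

open Subgroup

def MulEquiv.powerGraphIso {G H : Type*} [Group G] [Group H] (φ : G ≃* H) :
    powerGraph G ≃g powerGraph H where
  toEquiv := φ.toEquiv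
  map_rel_iff' {u w} := by
    simp only [powerGraph, MulEquiv.toEquiv_eq_coe, EquivLike.coe_coe,
      ne_eq, φ.injective.eq_iff, mem_zpowers_iff, ← map_zpow]

theorem SimpleGraph.Iso.card_adj_inter {V W : Type*} {Γ : SimpleGraph V} {Δ : SimpleGraph W}
    (e : Γ ≃g Δ) {S : Set V} {T : Set W} (hST : ∀ x, e x ∈ T ↔ x ∈ S) (u : V) :
    Nat.card {w | Δ.Adj (e u) w ∧ w ∈ T} = Nat.card {w | Γ.Adj u w ∧ w ∈ S} :=
  (Nat.card_congr (e.toEquiv.subtypeEquiv fun w => by simp [hST, e.map_adj_iff])).symm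

theorem exists_linearEquiv_apply_eq {K V : Type*} [Field K] [AddCommGroup V] [Module K V]
    {v w : V} (hv : v ≠ 0) (hw : w ≠ 0) : ∃ g : V ≃ₗ[K] V, g v = w := by
  let f := (LinearEquiv.toSpanNonzeroSingleton K V v hv).symm ≪≫ₗ
    LinearEquiv.toSpanNonzeroSingleton K V w hw
  obtain ⟨g, hg⟩ := Submodule.exists_linearEquiv_restrict_eq f
  have hv1 : (LinearEquiv.toSpanNonzeroSingleton K V v hv).symm
      ⟨v, Submodule.mem_span_singleton_self v⟩ = 1 := by
    rw [LinearEquiv.symm_apply_eq, LinearEquiv.toSpanNonzeroSingleton_one]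
  refine ⟨g, ?_⟩
  simpa [f, hv1] using (hg ⟨v, Submodule.mem_span_singleton_self v⟩).symm

theorem El.exists_mulEquiv_apply_eq {p n : ℕ} [Fact p.Prime] {a a' : El p n}
    (h : a = 1 ↔ a' = 1) : ∃ φ : El p n ≃* El p n, φ a = a' := by
  by_cases ha : a = 1
  · exact ⟨MulEquiv.refl _, by rw [ha, h.mp ha]; rfl⟩
  obtain ⟨g, hg⟩ := exists_linearEquiv_apply_eq (K := ZMod p)
    (v := a.toAdd) (w := a'.toAdd) ha (mt h.mpr ha)
  exact ⟨AddEquiv.toMultiplicative g.toAddEquiv, hg⟩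

theorem El.pow_eq_one {p n : ℕ} (x : El p n) : x ^ p = 1 := by
  have h : p • x.toAdd = 0 := by
    funext i
    simp
  rw [← ofAdd_toAdd x, ← ofAdd_nsmul, h, ofAdd_zero]

section Partition

variable {p q n m : ℕ}

theorem prodCongr_mem_partV_iff (φ : El p n ≃* El p n) (ψ : El q m ≃* El q m) (j : Fin 4)
    (w : El p n × El q m) : φ.prodCongr ψ w ∈ partV p q n m j ↔ w ∈ partV p q n m j := by
  obtain ⟨x, y⟩ := w
  change (φ x, ψ y) ∈ partV p q n m j ↔ _
  fin_cases j <;> simp [partV]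

theorem exists_prodCongr_apply_eq_of_mem_partV [Fact p.Prime] [Fact q.Prime] {i : Fin 4}
    {u v : El p n × El q m} (hu : u ∈ partV p q n m i) (hv : v ∈ partV p q n m i) :
    ∃ (φ : El p n ≃* El p n) (ψ : El q m ≃* El q m), φ.prodCongr ψ u = v := by
  have hfst : u.1 = 1 ↔ v.1 = 1 := by fin_cases i <;> simp_all [partV]
  have hsnd : u.2 = 1 ↔ v.2 = 1 := by fin_cases i <;> simp_all [partV]
  obtain ⟨φ, hφ⟩ := El.exists_mulEquiv_apply_eq hfst
  obtain ⟨ψ, hψ⟩ := El.exists_mulEquiv_apply_eq hsnd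
  exact ⟨φ, ψ, Prod.ext hφ hψ⟩

theorem powerGraph_partV_equitable (hp : p.Prime) (hq : q.Prime) (i j : Fin 4)
    (u v : El p n × El q m) (hu : u ∈ partV p q n m i) (hv : v ∈ partV p q n m i) :
    Nat.card {w | (powerGraph (El p n × El q m)).Adj u w ∧ w ∈ partV p q n m j}
      = Nat.card {w | (powerGraph (El p n × El q m)).Adj v w ∧ w ∈ partV p q n m j} := by
  have := Fact.mk hp
  have := Fact.mk hq
  obtain ⟨φ, ψ, rfl⟩ := exists_prodCongr_apply_eq_of_mem_partV hu hv
  exact ((φ.prodCongr ψ).powerGraphIso.card_adj_inter (prodCongr_mem_partV_iff φ ψ j) u).symm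

end Partition

theorem mem_zpowers_comm_of_pow_prime {G : Type*} [Group G] {p : ℕ} (hp : p.Prime)
    (hG : ∀ x : G, x ^ p = 1) {a c : G} (ha : a ≠ 1) (h : a ∈ zpowers c) : c ∈ zpowers a := by
  have := Fact.mk hp
  have hc : c ≠ 1 := by rintro rfl; exact ha (by simpa using h)
  have hcard : Nat.card (zpowers c) = p := by rw [Nat.card_zpowers, orderOf_eq_prime (hG c) hc]
  obtain ⟨k, hk⟩ := mem_zpowers_iff.mp <| mem_zpowers_of_prime_card hcard
    (g := ⟨a, h⟩) (g' := ⟨c, mem_zpowers c⟩) (by simpa [Subtype.ext_iff] using ha)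
  exact ⟨k, congrArg Subtype.val hk⟩

theorem Prod.mem_zpowers_iff {A B : Type*} [Group A] [Group B] {a x : A} {b y : B}
    (hab : (orderOf a).Coprime (orderOf b)) :
    (x, y) ∈ zpowers (a, b) ↔ x ∈ zpowers a ∧ y ∈ zpowers b := by
  constructor
  · rintro ⟨k, hk⟩
    exact ⟨⟨k, congrArg Prod.fst hk⟩, ⟨k, congrArg Prod.snd hk⟩⟩
  · rintro ⟨⟨i, rfl⟩, ⟨j, rfl⟩⟩
    obtain ⟨s, t, hst⟩ := Nat.isCoprime_iff_coprime.mpr hab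
    refine ⟨i * t * orderOf b + j * s * orderOf a, Prod.ext ?_ ?_⟩
    · refine zpow_eq_zpow_iff_modEq.mpr (Int.modEq_iff_dvd.mpr ⟨(i - j) * s, ?_⟩)
      linear_combination -i * hst
    · refine zpow_eq_zpow_iff_modEq.mpr (Int.modEq_iff_dvd.mpr ⟨(j - i) * t, ?_⟩)
      linear_combination -j * hst

theorem ncard_zpowers_diff_one {G : Type*} [Group G] {p : ℕ} (hp : p.Prime)
    (hG : ∀ x : G, x ^ p = 1) {a : G} (ha : a ≠ 1) :
    ((zpowers a : Set G) \ {1}).ncard = p - 1 := by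
  have := Fact.mk hp
  rw [Set.ncard_sdiff_singleton_of_mem (one_mem (zpowers a)), ← Nat.card_coe_set_eq,
    SetLike.coe_sort_coe, Nat.card_zpowers, orderOf_eq_prime (hG a) ha]

section Product

variable {A B : Type*} [Group A] [Group B] {p q : ℕ}

theorem powerGraph_prod_adj_iff (hp : p.Prime) (hq : q.Prime) (hpq : p.Coprime q)
    (hA : ∀ x : A, x ^ p = 1) (hB : ∀ y : B, y ^ q = 1) {a : A} {b : B} (ha : a ≠ 1)
    (hb : b ≠ 1) {x : A} {y : B} :
    (powerGraph (A × B)).Adj (a, b) (x, y) ↔ (x, y) ≠ (a, b) ∧ x ∈ zpowers a ∧ y ∈ zpowers b := by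
  have hco (x : A) (y : B) : (orderOf x).Coprime (orderOf y) :=
    (hpq.coprime_dvd_left (orderOf_dvd_of_pow_eq_one (hA x))).coprime_dvd_right
      (orderOf_dvd_of_pow_eq_one (hB y))
  simp only [powerGraph, Prod.mem_zpowers_iff (hco _ _), ne_comm (a := (a, b))]
  constructor
  · rintro ⟨hne, ⟨hax, hby⟩ | hxy⟩
    · exact ⟨hne, mem_zpowers_comm_of_pow_prime hp hA ha hax,
        mem_zpowers_comm_of_pow_prime hq hB hb hby⟩
    · exact ⟨hne, hxy⟩
  · rintro ⟨hne, hxy⟩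
    exact ⟨hne, Or.inr hxy⟩

end Product

section Counts

variable {p q n m : ℕ} (hp : p.Prime) (hq : q.Prime) (hpq : p ≠ q) {a : El p n} {b : El q m}
  (ha : a ≠ 1) (hb : b ≠ 1)
include hp hq hpq ha hb

theorem powerGraph_El_prod_adj_iff {x : El p n} {y : El q m} :
    (powerGraph (El p n × El q m)).Adj (a, b) (x, y) ↔
      (x, y) ≠ (a, b) ∧ x ∈ zpowers a ∧ y ∈ zpowers b :=
  powerGraph_prod_adj_iff hp hq ((Nat.coprime_primes hp hq).mpr hpq) El.pow_eq_one
    El.pow_eq_one ha hb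

theorem card_adj_inter_partV_one :
    Nat.card {w | (powerGraph (El p n × El q m)).Adj (a, b) w ∧ w ∈ partV p q n m 1} = p - 1 := by
  have hset : {w | (powerGraph (El p n × El q m)).Adj (a, b) w ∧ w ∈ partV p q n m 1}
      = ((zpowers a : Set (El p n)) \ {1}) ×ˢ {1} := by
    ext ⟨x, y⟩
    simp only [Set.mem_ofPred_eq, powerGraph_El_prod_adj_iff hp hq hpq ha hb, partV,
      Set.mem_prod, Set.mem_sdiff, Set.mem_singleton_iff, SetLike.mem_coe]
    have := one_mem (zpowers b)
    grind
  rw [Nat.card_coe_set_eq, hset, Set.ncard_prod, ncard_zpowers_diff_one hp El.pow_eq_one ha,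
    Set.ncard_singleton, mul_one]

theorem card_adj_inter_partV_three :
    Nat.card {w | (powerGraph (El p n × El q m)).Adj (a, b) w ∧ w ∈ partV p q n m 3} = q - 1 := by
  have hset : {w | (powerGraph (El p n × El q m)).Adj (a, b) w ∧ w ∈ partV p q n m 3}
      = {1} ×ˢ ((zpowers b : Set (El q m)) \ {1}) := by
    ext ⟨x, y⟩
    simp only [Set.mem_ofPred_eq, powerGraph_El_prod_adj_iff hp hq hpq ha hb, partV,
      Set.mem_prod, Set.mem_sdiff, Set.mem_singleton_iff, SetLike.mem_coe]
    have := one_mem (zpowers a)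
    grind
  rw [Nat.card_coe_set_eq, hset, Set.ncard_prod, ncard_zpowers_diff_one hq El.pow_eq_one hb,
    Set.ncard_singleton, one_mul]

theorem card_adj_inter_partV_two :
    Nat.card {w | (powerGraph (El p n × El q m)).Adj (a, b) w ∧ w ∈ partV p q n m 2}
      = (p - 1) * (q - 1) - 1 := by
  have hset : {w | (powerGraph (El p n × El q m)).Adj (a, b) w ∧ w ∈ partV p q n m 2}
      = ((zpowers a : Set (El p n)) \ {1}) ×ˢ ((zpowers b : Set (El q m)) \ {1}) \ {(a, b)} := by
    ext ⟨x, y⟩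
    simp only [Set.mem_ofPred_eq, powerGraph_El_prod_adj_iff hp hq hpq ha hb, partV,
      Set.mem_prod, Set.mem_sdiff, Set.mem_singleton_iff, SetLike.mem_coe]
    grind
  have hab : (a, b) ∈ ((zpowers a : Set (El p n)) \ {1}) ×ˢ ((zpowers b : Set (El q m)) \ {1}) :=
    ⟨⟨mem_zpowers a, ha⟩, ⟨mem_zpowers b, hb⟩⟩
  rw [Nat.card_coe_set_eq, hset, Set.ncard_sdiff_singleton_of_mem hab, Set.ncard_prod,
    ncard_zpowers_diff_one hp El.pow_eq_one ha, ncard_zpowers_diff_one hq El.pow_eq_one hb]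

end Counts

theorem stmt10_general (p q n m : ℕ) (hp : p.Prime) (hq : q.Prime) (hpq : p ≠ q) :
    (∀ (i j : Fin 4), ∀ u v : El p n × El q m,
        u ∈ partV p q n m i → v ∈ partV p q n m i →
        Nat.card {w | (powerGraph (El p n × El q m)).Adj u w ∧ w ∈ partV p q n m j}
          = Nat.card {w | (powerGraph (El p n × El q m)).Adj v w ∧ w ∈ partV p q n m j}) ∧
    (∀ u : El p n × El q m, u ∈ partV p q n m 2 →
      Nat.card {w | (powerGraph (El p n × El q m)).Adj u w ∧ w ∈ partV p q n m 1} = p - 1 ∧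
      Nat.card {w | (powerGraph (El p n × El q m)).Adj u w ∧ w ∈ partV p q n m 2}
        = (p - 1) * (q - 1) - 1 ∧
      Nat.card {w | (powerGraph (El p n × El q m)).Adj u w ∧ w ∈ partV p q n m 3} = q - 1) := by
  refine ⟨powerGraph_partV_equitable hp hq, ?_⟩
  rintro ⟨a, b⟩ ⟨ha, hb⟩
  exact ⟨card_adj_inter_partV_one hp hq hpq ha hb, card_adj_inter_partV_two hp hq hpq ha hb,
    card_adj_inter_partV_three hp hq hpq ha hb⟩

theorem stmt10 (p q n m : ℕ) (hp : p.Prime) (hq : q.Prime) (hpq : p ≠ q)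
    (hn : 1 ≤ n) (hm : 1 ≤ m) :
    (∀ (i j : Fin 4), ∀ u v : El p n × El q m,
        u ∈ partV p q n m i → v ∈ partV p q n m i →
        Nat.card {w | (powerGraph (El p n × El q m)).Adj u w ∧ w ∈ partV p q n m j}
          = Nat.card {w | (powerGraph (El p n × El q m)).Adj v w ∧ w ∈ partV p q n m j}) ∧
    (∀ u : El p n × El q m, u ∈ partV p q n m 2 →
      Nat.card {w | (powerGraph (El p n × El q m)).Adj u w ∧ w ∈ partV p q n m 1} = p - 1 ∧
      Nat.card {w | (powerGraph (El p n × El q m)).Adj u w ∧ w ∈ partV p q n m 2}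
        = (p - 1) * (q - 1) - 1 ∧
      Nat.card {w | (powerGraph (El p n × El q m)).Adj u w ∧ w ∈ partV p q n m 3} = q - 1) :=
  stmt10_general p q n m hp hq hpq
end

section
/- Let G = El(pⁿ) × Z_m with n ≥ 2, p prime, m ≥ 1 and gcd(m, p) = 1. Then the dominating vertices of the enhanced power graph of G are exactly the elements (e, a) with a ∈ Z_m, where e is the identity of El(pⁿ). -/
open Polynomial

/-!
For `(1, a)` and any `(x, b)`: the order of `x` divides `p` and so is coprime to `m`, hence
for a generator `y` of `ℤ/m` the cyclic group generated by `(x, y)` is all of `⟨x⟩ × ℤ/m`,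
which contains both elements. Conversely, if `u ≠ 1` in a group of exponent `p`, every cyclic
subgroup containing `u` has order `p` and thus equals `⟨u⟩`; as `|El(pⁿ)| = pⁿ > p`, some
`v ∉ ⟨u⟩` exists, and `(v, 1)` shares no cyclic subgroup with `(u, a)`.
-/

open Subgroup

theorem zpowers_mk_eq_prod_of_coprime {G H : Type*} [Group G] [Group H] {x : G} {y : H}
    (hxy : (orderOf x).Coprime (orderOf y)) :
    zpowers (x, y) = (zpowers x).prod (zpowers y) := by
  have hbezout := Nat.gcd_eq_gcd_ab (orderOf x) (orderOf y)
  rw [hxy, Nat.cast_one] at hbezout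
  have hinl : ((x, 1) : G × H) ∈ zpowers (x, y) := by
    refine ⟨orderOf y * Nat.gcdB (orderOf x) (orderOf y), Prod.ext ?_ ?_⟩
    · refine (zpow_eq_zpow_iff_modEq.mpr ?_).trans (zpow_one x)
      exact Int.modEq_iff_dvd.mpr ⟨Nat.gcdA (orderOf x) (orderOf y), by linarith⟩
    · rw [Prod.pow_snd, zpow_mul, zpow_natCast, pow_orderOf_eq_one, one_zpow]
  have hinr : ((1, y) : G × H) ∈ zpowers (x, y) := by
    refine ⟨orderOf x * Nat.gcdA (orderOf x) (orderOf y), Prod.ext ?_ ?_⟩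
    · rw [Prod.pow_fst, zpow_mul, zpow_natCast, pow_orderOf_eq_one, one_zpow]
    · refine (zpow_eq_zpow_iff_modEq.mpr ?_).trans (zpow_one y)
      exact Int.modEq_iff_dvd.mpr ⟨Nat.gcdB (orderOf x) (orderOf y), by linarith⟩
  refine le_antisymm (zpowers_le.mpr (mem_prod.mpr ⟨mem_zpowers x, mem_zpowers y⟩)) ?_
  rw [prod_le_iff, MonoidHom.map_zpowers, MonoidHom.map_zpowers]
  exact ⟨zpowers_le.mpr hinl, zpowers_le.mpr hinr⟩

theorem mem_zpowers_of_mem_zpowers_of_pow_prime_eq_one {G : Type*} [Group G] {p : ℕ}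
    (hp : p.Prime) (hG : ∀ x : G, x ^ p = 1) {u v c : G} (hu : u ≠ 1) (huc : u ∈ zpowers c)
    (hvc : v ∈ zpowers c) : v ∈ zpowers u := by
  have : Fact p.Prime := ⟨hp⟩
  have hc : c ≠ 1 := by rintro rfl; simp_all
  have horder : ∀ {x : G}, x ≠ 1 → orderOf x = p := fun hx => orderOf_eq_prime (hG _) hx
  have : Finite (zpowers c) :=
    Nat.finite_of_card_ne_zero (by rw [Nat.card_zpowers, horder hc]; exact hp.ne_zero)
  have hle : zpowers u ≤ zpowers c := zpowers_le.mpr huc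
  rwa [eq_of_le_of_card_ge hle (by rw [Nat.card_zpowers, Nat.card_zpowers, horder hc, horder hu])]

theorem exists_notMem_zpowers {G : Type*} [Group G] [Finite G] {p : ℕ} (hp : 0 < p)
    (hG : ∀ x : G, x ^ p = 1) (hcard : p < Nat.card G) (u : G) : ∃ v, v ∉ zpowers u := by
  by_contra! hall
  have htop : zpowers u = ⊤ := eq_top_iff.mpr fun v _ => hall v
  have := orderOf_le_of_pow_eq_one hp (hG u)
  rw [← Nat.card_zpowers, htop, card_top] at this
  omega

theorem enhancedPowerGraph_prod_adj_of_fst_eq_one {G H : Type*} [Group G] [Group H] [IsCyclic H]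
    (hcop : ∀ x : G, (orderOf x).Coprime (Nat.card H)) {g h : G × H} (hg : g.1 = 1)
    (hne : g ≠ h) : (enhancedPowerGraph (G × H)).Adj g h := by
  obtain ⟨y, hy⟩ := IsCyclic.exists_generator (α := H)
  have hytop : zpowers y = ⊤ := eq_top_iff.mpr fun z _ => hy z
  have hcy : (orderOf h.1).Coprime (orderOf y) := by
    rw [← Nat.card_zpowers y, hytop, card_top]; exact hcop h.1
  refine ⟨hne, (h.1, y), ?_, ?_⟩ <;>
    rw [zpowers_mk_eq_prod_of_coprime hcy, mem_prod, hytop]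
  · exact ⟨hg ▸ one_mem _, mem_top _⟩
  · exact ⟨mem_zpowers _, mem_top _⟩

theorem fst_eq_one_of_forall_enhancedPowerGraph_prod_adj {G H : Type*} [Group G] [Group H]
    [Finite G] {p : ℕ} (hp : p.Prime) (hG : ∀ x : G, x ^ p = 1) (hcard : p < Nat.card G)
    {g : G × H} (hdom : ∀ h, h ≠ g → (enhancedPowerGraph (G × H)).Adj g h) : g.1 = 1 := by
  by_contra hg
  obtain ⟨v, hv⟩ := exists_notMem_zpowers hp.pos hG hcard g.1
  have hne : (v, (1 : H)) ≠ g := fun h => hv (h ▸ mem_zpowers v)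
  obtain ⟨-, c, hgc, hvc⟩ := hdom _ hne
  have hfst : ∀ {k : G × H}, k ∈ zpowers c → k.1 ∈ zpowers c.1 := fun hk => by
    rw [← MonoidHom.coe_fst, ← MonoidHom.map_zpowers]; exact mem_map_of_mem _ hk
  exact hv (mem_zpowers_of_mem_zpowers_of_pow_prime_eq_one hp hG hg (hfst hgc) (hfst hvc))

theorem forall_enhancedPowerGraph_prod_adj_iff {G H : Type*} [Group G] [Group H] [Finite G]
    [IsCyclic H] {p : ℕ} (hp : p.Prime) (hG : ∀ x : G, x ^ p = 1) (hcard : p < Nat.card G)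
    (hcop : p.Coprime (Nat.card H)) (g : G × H) :
    (∀ h, h ≠ g → (enhancedPowerGraph (G × H)).Adj g h) ↔ g.1 = 1 :=
  ⟨fst_eq_one_of_forall_enhancedPowerGraph_prod_adj hp hG hcard, fun hg _ hne =>
    enhancedPowerGraph_prod_adj_of_fst_eq_one
      (fun x => hcop.coprime_dvd_left (orderOf_dvd_of_pow_eq_one (hG x))) hg hne.symm⟩

theorem El.natCard {p n : ℕ} : Nat.card (El p n) = p ^ n := by
  rw [show Nat.card (El p n) = Nat.card (Fin n → ZMod p) from rfl, Nat.card_fun, Nat.card_zmod,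
    Nat.card_fin]

theorem stmt13_general (p n m : ℕ) (hp : p.Prime) (hn : 2 ≤ n)
    (hgcd : Nat.gcd m p = 1) (g : El p n × Multiplicative (ZMod m)) :
    (∀ h : El p n × Multiplicative (ZMod m), h ≠ g →
        (enhancedPowerGraph (El p n × Multiplicative (ZMod m))).Adj g h)
      ↔ g.1 = 1 := by
  have : NeZero p := ⟨hp.ne_zero⟩
  refine forall_enhancedPowerGraph_prod_adj_iff hp El.pow_eq_one ?_ ?_ g
  · rw [El.natCard]
    exact (pow_one p).symm.trans_lt (Nat.pow_lt_pow_right hp.one_lt hn)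
  · rw [show Nat.card (Multiplicative (ZMod m)) = m from Nat.card_zmod m]
    exact Nat.coprime_comm.mp hgcd

theorem stmt13 (p n m : ℕ) (hp : p.Prime) (hn : 2 ≤ n) (hm : 1 ≤ m)
    (hgcd : Nat.gcd m p = 1) (g : El p n × Multiplicative (ZMod m)) :
    (∀ h : El p n × Multiplicative (ZMod m), h ≠ g →
        (enhancedPowerGraph (El p n × Multiplicative (ZMod m))).Adj g h)
      ↔ g.1 = 1 :=
  stmt13_general p n m hp hn hgcd g
end
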